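/- Let M be a von Neumann algebra with a projection P having core 0 and central carrier I, and let ξ ≠ 1 be a scalar. Let L : M → M be an additive map satisfying L(AB − ξBA) = L(A)B − ξBL(A) + L(B)A − ξAL(B) whenever AB = 0. Then PL(I)(I−P) = 0, (I−P)L(I)P = 0, (I−P)L(P)(I−P) = 0, and PL(I−P)P = 0. -/

import Mathlib

variable {H : Type*} [NormedAddCommGroup H] [InnerProductSpace ℂ H] [CompleteSpace H]

/-- `Z` lies in the center of the von Neumann algebra `M`. -/
def VonNeumannAlgebra.IsCentral (M : VonNeumannAlgebra H) (Z : H →L[ℂ] H) : Prop :=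
  Z ∈ M ∧ ∀ A ∈ M, Z * A = A * Z

/-- `P` is a projection (self-adjoint idempotent) in `M`. -/
def VonNeumannAlgebra.IsProjection (M : VonNeumannAlgebra H) (P : H →L[ℂ] H) : Prop :=
  P ∈ M ∧ P * P = P ∧ star P = P

/-- `Q` is a central projection of `M`. -/
def VonNeumannAlgebra.IsCentralProjection (M : VonNeumannAlgebra H) (Q : H →L[ℂ] H) : Prop :=
  M.IsCentral Q ∧ Q * Q = Q ∧ star Q = Q

/-- The core of the projection `P` (the largest central projection below `P`) is zero,
i.e. the only central projection `Q` with `Q ≤ P` (equivalently `Q * P = Q`) is `0`. -/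
def VonNeumannAlgebra.CoreZero (M : VonNeumannAlgebra H) (P : H →L[ℂ] H) : Prop :=
  ∀ Q : H →L[ℂ] H, M.IsCentralProjection Q → Q * P = Q → Q = 0

/-- The central carrier of the projection `P` (the smallest central projection above `P`)
is `1`, i.e. the only central projection `Q` with `Q * P = P` is `1`. -/
def VonNeumannAlgebra.CarrierOne (M : VonNeumannAlgebra H) (P : H →L[ℂ] H) : Prop :=
  ∀ Q : H →L[ℂ] H, M.IsCentralProjection Q → Q * P = P → Q = 1

/-- `M` has no central summand of type I₁: equivalently, `M` contains a projection
with core `0` and central carrier `1`. -/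
def VonNeumannAlgebra.NoTypeI1 (M : VonNeumannAlgebra H) : Prop :=
  ∃ P : H →L[ℂ] H, M.IsProjection P ∧ M.CoreZero P ∧ M.CarrierOne P

/-!
Write `q = 1 - p`. The zero product `p q = 0` gives `(1 - ξ) q L(p) q = 0` and
`p L(p) q = ξ p L(q) q`. For `E = q X p` both `E q = 0` and `p E = 0`, and comparing the two
resulting expressions for `p L(-ξ E) p` yields `p L(E) p = p L(q) E` and then
`(1 + ξ) p L(q) q X p = 0` for all `X ∈ M`. Thus `p L(1) q = (1 + ξ) p L(q) q` annihilates `M p`,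
so it vanishes on the range of the central carrier of `p`, which is `1`. Exchanging `p` and `q`
uses that the core of `P` is `0` exactly when the central carrier of `1 - P` is `1`.
-/

section XiLie

variable {𝕜 R : Type*} [Field 𝕜] [Ring R] [Algebra 𝕜 R]

theorem IsIdempotentElem.orthogonal_of_add_eq_one {p q : R} (hp : IsIdempotentElem p)
    (h : p + q = 1) : p * q = 0 ∧ q * p = 0 ∧ IsIdempotentElem q := by
  obtain rfl : q = 1 - p := eq_sub_of_add_eq' h
  exact ⟨hp.mul_one_sub_self, hp.one_sub_mul_self, hp.one_sub⟩

theorem Subalgebra.mem_of_add_eq_one {S : Subalgebra 𝕜 R} {p q : R} (hp : p ∈ S)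
    (h : p + q = 1) : q ∈ S :=
  eq_sub_of_add_eq' h ▸ sub_mem S.one_mem hp

/-- `[A, B]_ξ` -/
def xiCommutator (ξ : 𝕜) (A B : R) : R := A * B - ξ • (B * A)

def IsXiLieDerivableAtZero (S : Subalgebra 𝕜 R) (ξ : 𝕜) (L : R → R) : Prop :=
  ∀ A ∈ S, ∀ B ∈ S, A * B = 0 →
    L (xiCommutator ξ A B) = xiCommutator ξ (L A) B + xiCommutator ξ (L B) A

namespace IsXiLieDerivableAtZero

variable {S : Subalgebra 𝕜 R} {ξ : 𝕜} {L : R → R} {p q : R}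

theorem xiCommutator_add_xiCommutator_eq_zero (hL : IsXiLieDerivableAtZero S ξ L)
    (hL0 : L 0 = 0) (hp : IsIdempotentElem p) (hpS : p ∈ S) (hpq : p + q = 1) :
    xiCommutator ξ (L p) q + xiCommutator ξ (L q) p = 0 := by
  obtain ⟨hpq0, hqp0, -⟩ := hp.orthogonal_of_add_eq_one hpq
  have hqS : q ∈ S := S.mem_of_add_eq_one hpS hpq
  have h := hL p hpS q hqS hpq0
  rwa [xiCommutator, hpq0, hqp0, smul_zero, sub_zero, hL0, eq_comm] at h

theorem compl_mul_map_mul_compl_eq_zero (hL : IsXiLieDerivableAtZero S ξ L) (hL0 : L 0 = 0)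
    (hξ : ξ ≠ 1) (hp : IsIdempotentElem p) (hpS : p ∈ S) (hpq : p + q = 1) :
    q * L p * q = 0 := by
  obtain ⟨hpq0, hqp0, hq⟩ := hp.orthogonal_of_add_eq_one hpq
  have hpq0' (y : R) : y * p * q = 0 := by rw [mul_assoc, hpq0, mul_zero]
  have h := congrArg (q * · * q) (hL.xiCommutator_add_xiCommutator_eq_zero hL0 hp hpS hpq)
  simp only [xiCommutator, mul_add, add_mul, mul_sub, sub_mul, mul_smul_comm, smul_mul_assoc,
    ← mul_assoc, hq.eq, hq.mul_mul_self, hqp0, hpq0', zero_mul, mul_zero, smul_zero, sub_zero,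
    add_zero] at h
  have h1 : (1 - ξ) • (q * L p * q) = 0 := by linear_combination (norm := module) h
  exact (smul_eq_zero.mp h1).resolve_left (sub_ne_zero.mpr hξ.symm)

theorem mul_map_mul_compl_eq (hL : IsXiLieDerivableAtZero S ξ L) (hL0 : L 0 = 0)
    (hp : IsIdempotentElem p) (hpS : p ∈ S) (hpq : p + q = 1) :
    p * L p * q = ξ • (p * L q * q) := by
  obtain ⟨hpq0, -, hq⟩ := hp.orthogonal_of_add_eq_one hpq
  have hpq0' (y : R) : y * p * q = 0 := by rw [mul_assoc, hpq0, mul_zero]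
  have h := congrArg (p * · * q) (hL.xiCommutator_add_xiCommutator_eq_zero hL0 hp hpS hpq)
  simp only [xiCommutator, mul_add, add_mul, mul_sub, sub_mul, mul_smul_comm, smul_mul_assoc,
    ← mul_assoc, hp.eq, hq.mul_mul_self, hpq0, hpq0', zero_mul, mul_zero, smul_zero, sub_zero,
    zero_sub] at h
  linear_combination (norm := module) h

theorem mul_map_neg_smul_mul_eq (hL : IsXiLieDerivableAtZero S ξ L) (hp : IsIdempotentElem p)
    (hpS : p ∈ S) (hpq : p + q = 1) {X : R} (hX : X ∈ S) :
    p * L (-(ξ • (q * X * p))) * p = p * L q * q * X * p := by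
  obtain ⟨hpq0, hqp0, hq⟩ := hp.orthogonal_of_add_eq_one hpq
  have hpq0' (y : R) : y * p * q = 0 := by rw [mul_assoc, hpq0, mul_zero]
  have hqp0' (y : R) : y * q * p = 0 := by rw [mul_assoc, hqp0, mul_zero]
  have hqS : q ∈ S := S.mem_of_add_eq_one hpS hpq
  have h := congrArg (p * · * p)
    (hL (q * X * p) (mul_mem (mul_mem hqS hX) hpS) q hqS (hpq0' _))
  simpa only [xiCommutator, mul_add, add_mul, mul_sub, mul_smul_comm, ← mul_assoc, hq.eq,
    hp.mul_mul_self, hpq0, hpq0', hqp0', zero_mul, smul_zero, sub_zero, zero_sub, zero_add] using h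

theorem mul_map_mul_eq (hL : IsXiLieDerivableAtZero S ξ L) (hL0 : L 0 = 0) (hξ : ξ ≠ 1)
    (hp : IsIdempotentElem p) (hpS : p ∈ S) (hpq : p + q = 1) {X : R} (hX : X ∈ S) :
    p * L (q * X * p) * p = p * L q * q * X * p := by
  obtain ⟨hpq0, -, -⟩ := hp.orthogonal_of_add_eq_one hpq
  have hqS : q ∈ S := S.mem_of_add_eq_one hpS hpq
  have hpE : p * (q * X * p) = 0 := by rw [← mul_assoc, ← mul_assoc, hpq0, zero_mul, zero_mul]
  have h := congrArg (p * · * p) (hL p hpS (q * X * p) (mul_mem (mul_mem hqS hX) hpS) hpE)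
  simp only [xiCommutator, mul_add, add_mul, mul_sub, sub_mul, mul_smul_comm, smul_mul_assoc,
    ← mul_assoc, hp.eq, hp.mul_mul_self, hpq0, zero_mul, smul_zero, sub_zero,
    zero_sub, hL.mul_map_mul_compl_eq hL0 hp hpS hpq,
    hL.mul_map_neg_smul_mul_eq hp hpS hpq hX] at h
  have h1 : (1 - ξ) • (p * L q * q * X * p - p * L (q * X * p) * p) = 0 := by
    linear_combination (norm := module) h
  exact (sub_eq_zero.mp ((smul_eq_zero.mp h1).resolve_left (sub_ne_zero.mpr hξ.symm))).symm

theorem one_add_smul_mul_map_mul_eq_zero (hL : IsXiLieDerivableAtZero S ξ L) (hL0 : L 0 = 0)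
    (hξ : ξ ≠ 1) (hp : IsIdempotentElem p) (hpS : p ∈ S) (hpq : p + q = 1) {X : R}
    (hX : X ∈ S) : (1 + ξ) • (p * L q * q * X * p) = 0 := by
  have hE : q * (-ξ • X) * p = -(ξ • (q * X * p)) := by
    rw [mul_smul_comm, smul_mul_assoc, neg_smul]
  have h := hL.mul_map_mul_eq hL0 hξ hp hpS hpq (S.smul_mem hX (-ξ))
  rw [hE, hL.mul_map_neg_smul_mul_eq hp hpS hpq hX] at h
  simp only [mul_smul_comm, smul_mul_assoc] at h
  linear_combination (norm := module) h

theorem mul_map_one_mul_compl_eq (hL : IsXiLieDerivableAtZero S ξ L)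
    (hadd : ∀ A ∈ S, ∀ B ∈ S, L (A + B) = L A + L B) (hp : IsIdempotentElem p) (hpS : p ∈ S)
    (hpq : p + q = 1) : p * L 1 * q = (1 + ξ) • (p * L q * q) := by
  have hqS : q ∈ S := S.mem_of_add_eq_one hpS hpq
  have hL0 : L 0 = 0 := by simpa using hadd 0 S.zero_mem 0 S.zero_mem
  rw [← hpq, hadd p hpS q hqS, mul_add, add_mul, hL.mul_map_mul_compl_eq hL0 hp hpS hpq]
  module

end IsXiLieDerivableAtZero

end XiLie

namespace VonNeumannAlgebra

variable (M : VonNeumannAlgebra H)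

def carrierSubspace (e : H →L[ℂ] H) : Submodule ℂ H :=
  (⨆ X ∈ M, (X * e).range).topologicalClosure

instance (e : H →L[ℂ] H) : CompleteSpace (M.carrierSubspace e) :=
  Submodule.topologicalClosure.completeSpace _

noncomputable def centralCarrier (e : H →L[ℂ] H) : H →L[ℂ] H :=
  (M.carrierSubspace e).starProjection

variable {M}

theorem isStarProjection_centralCarrier (e : H →L[ℂ] H) :
    IsStarProjection (M.centralCarrier e) :=
  isStarProjection_starProjection

theorem range_centralCarrier (e : H →L[ℂ] H) :
    (M.centralCarrier e).range = M.carrierSubspace e :=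
  Submodule.range_starProjection _

theorem carrierSubspace_mem_invtSubmodule {e T : H →L[ℂ] H}
    (hT : ∀ X ∈ M, ∃ Y ∈ M, (T * (X * e)).range ≤ (Y * e).range) :
    M.carrierSubspace e ∈ Module.End.invtSubmodule (T : H →ₗ[ℂ] H) := by
  refine Submodule.topologicalClosure_mem_invtSubmodule ?_
  rw [Module.End.mem_invtSubmodule_iff_map_le]
  simp only [Submodule.map_iSup]
  refine iSup₂_le fun X hX => ?_
  obtain ⟨Y, hY, hle⟩ := hT X hX
  rw [← LinearMap.range_comp]
  exact hle.trans (le_iSup₂_of_le Y hY le_rfl)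

theorem centralCarrier_mem {e : H →L[ℂ] H} (he : e ∈ M) : M.centralCarrier e ∈ M := by
  rw [IsStarProjection.mem_iff (isStarProjection_centralCarrier e)]
  intro y hy
  rw [range_centralCarrier]
  refine carrierSubspace_mem_invtSubmodule fun X hX => ⟨X, hX, ?_⟩
  rw [← mul_assoc, ← mem_commutant_iff.mp hy X hX, mul_assoc,
    ← mem_commutant_iff.mp hy e he, ← mul_assoc]
  exact LinearMap.range_comp_le_range _ _

theorem centralCarrier_mem_commutant (e : H →L[ℂ] H) : M.centralCarrier e ∈ M.commutant := by
  rw [IsStarProjection.mem_iff (isStarProjection_centralCarrier e), commutant_commutant]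
  intro T hT
  rw [range_centralCarrier]
  exact carrierSubspace_mem_invtSubmodule fun X hX => ⟨T * X, mul_mem hT hX, by rw [mul_assoc]⟩

theorem isCentralProjection_centralCarrier {e : H →L[ℂ] H} (he : e ∈ M) :
    M.IsCentralProjection (M.centralCarrier e) :=
  ⟨⟨centralCarrier_mem he,
      fun A hA => (mem_commutant_iff.mp (centralCarrier_mem_commutant e) A hA).symm⟩,
    (isStarProjection_centralCarrier e).isIdempotentElem.eq,
    (isStarProjection_centralCarrier e).isSelfAdjoint.star_eq⟩

theorem centralCarrier_mul_self (e : H →L[ℂ] H) : M.centralCarrier e * e = e := by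
  ext h
  refine Submodule.starProjection_eq_self_iff.mpr (Submodule.le_topologicalClosure _ ?_)
  exact Submodule.mem_iSup_of_mem 1 (Submodule.mem_iSup_of_mem M.one_mem ⟨h, by simp⟩)

theorem mul_centralCarrier_eq_zero {e Z : H →L[ℂ] H} (hZ : ∀ X ∈ M, Z * X * e = 0) :
    Z * M.centralCarrier e = 0 := by
  have hle : M.carrierSubspace e ≤ Z.ker := by
    refine Submodule.topologicalClosure_minimal _ (iSup₂_le fun X hX => ?_) Z.isClosed_ker
    rw [LinearMap.range_le_ker_iff]
    have : Z * (X * e) = 0 := by rw [← mul_assoc, hZ X hX]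
    exact congrArg ContinuousLinearMap.toLinearMap this
  ext h
  exact hle (Submodule.starProjection_apply_mem _ h)

theorem IsCentralProjection.one_sub {Q : H →L[ℂ] H} (hQ : M.IsCentralProjection Q) :
    M.IsCentralProjection (1 - Q) := by
  obtain ⟨⟨hQM, hQc⟩, hQQ, hQs⟩ := hQ
  refine ⟨⟨sub_mem M.one_mem hQM, fun A hA => ?_⟩, IsIdempotentElem.one_sub hQQ, ?_⟩
  · rw [sub_mul, mul_sub, one_mul, mul_one, hQc A hA]
  · rw [star_sub, star_one, hQs]

theorem CarrierOne.eq_zero_of_forall_mul_mul_eq_zero {e Z : H →L[ℂ] H} (hcar : M.CarrierOne e)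
    (he : e ∈ M) (hZ : ∀ X ∈ M, Z * X * e = 0) : Z = 0 := by
  simpa [hcar _ (isCentralProjection_centralCarrier he) (centralCarrier_mul_self e)] using
    mul_centralCarrier_eq_zero hZ

theorem CoreZero.carrierOne_one_sub {P : H →L[ℂ] H} (hcore : M.CoreZero P) :
    M.CarrierOne (1 - P) := by
  intro Q hQ hQP
  have h : (1 - Q) * P = 1 - Q := by
    rw [mul_sub, mul_one] at hQP
    rw [sub_mul, one_mul]
    linear_combination (norm := module) hQP
  exact (sub_eq_zero.mp (hcore _ hQ.one_sub h)).symm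

theorem CarrierOne.mul_map_one_mul_eq_zero {P Q : H →L[ℂ] H} {ξ : ℂ}
    {L : (H →L[ℂ] H) → (H →L[ℂ] H)} (hcar : M.CarrierOne P) (hP : P ∈ M)
    (hPi : IsIdempotentElem P) (hPQ : P + Q = 1)
    (hL : IsXiLieDerivableAtZero M.toStarSubalgebra.toSubalgebra ξ L)
    (hadd : ∀ A ∈ M, ∀ B ∈ M, L (A + B) = L A + L B) (hξ : ξ ≠ 1) :
    P * L 1 * Q = 0 := by
  have hL0 : L 0 = 0 := by simpa using hadd 0 M.zero_mem 0 M.zero_mem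
  rw [hL.mul_map_one_mul_compl_eq hadd hPi hP hPQ]
  refine hcar.eq_zero_of_forall_mul_mul_eq_zero hP fun X hX => ?_
  rw [smul_mul_assoc, smul_mul_assoc]
  exact hL.one_add_smul_mul_map_mul_eq_zero hL0 hξ hPi hP hPQ hX

end VonNeumannAlgebra

theorem xi_lie_offdiag_vanishing_general (M : VonNeumannAlgebra H) (P : H →L[ℂ] H)
    (hP : M.IsProjection P) (hcore : M.CoreZero P) (hcar : M.CarrierOne P)
    (ξ : ℂ) (hξ : ξ ≠ 1)
    (L : (H →L[ℂ] H) → (H →L[ℂ] H))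
    (hadd : ∀ A ∈ M, ∀ B ∈ M, L (A + B) = L A + L B)
    (hcond : ∀ A ∈ M, ∀ B ∈ M, A * B = 0 →
      L (A * B - ξ • (B * A)) =
        (L A * B - ξ • (B * L A)) + (L B * A - ξ • (A * L B))) :
    P * L 1 * (1 - P) = 0 ∧ (1 - P) * L 1 * P = 0 ∧
    (1 - P) * L P * (1 - P) = 0 ∧ P * L (1 - P) * P = 0 := by
  obtain ⟨hPM, hPi, -⟩ := hP
  have hL : IsXiLieDerivableAtZero M.toStarSubalgebra.toSubalgebra ξ L := hcond
  have hL0 : L 0 = 0 := by simpa using hadd 0 M.zero_mem 0 M.zero_mem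
  have hQM : 1 - P ∈ M := sub_mem M.one_mem hPM
  have hQi : IsIdempotentElem (1 - P) := IsIdempotentElem.one_sub hPi
  exact ⟨hcar.mul_map_one_mul_eq_zero hPM hPi (add_sub_cancel P 1) hL hadd hξ,
    hcore.carrierOne_one_sub.mul_map_one_mul_eq_zero hQM hQi (sub_add_cancel 1 P) hL hadd hξ,
    hL.compl_mul_map_mul_compl_eq_zero hL0 hξ hPi hPM (add_sub_cancel P 1),
    hL.compl_mul_map_mul_compl_eq_zero hL0 hξ hQi hQM (sub_add_cancel 1 P)⟩

theorem xi_lie_offdiag_vanishing (M : VonNeumannAlgebra H) (P : H →L[ℂ] H)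
    (hP : M.IsProjection P) (hcore : M.CoreZero P) (hcar : M.CarrierOne P)
    (ξ : ℂ) (hξ : ξ ≠ 1)
    (L : (H →L[ℂ] H) → (H →L[ℂ] H))
    (hmaps : ∀ A ∈ M, L A ∈ M)
    (hadd : ∀ A ∈ M, ∀ B ∈ M, L (A + B) = L A + L B)
    (hcond : ∀ A ∈ M, ∀ B ∈ M, A * B = 0 →
      L (A * B - ξ • (B * A)) =
        (L A * B - ξ • (B * L A)) + (L B * A - ξ • (A * L B))) :
    P * L 1 * (1 - P) = 0 ∧ (1 - P) * L 1 * P = 0 ∧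
    (1 - P) * L P * (1 - P) = 0 ∧ P * L (1 - P) * P = 0 :=
  xi_lie_offdiag_vanishing_general M P hP hcore hcar ξ hξ L hadd hcond
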